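/- The four directions α₁ = (0, v₋), α₂ = ((C²−Id)v₊, T v₊), α₃ = (0, v₊), α₄ = ((C²−Id)v₋, T v₋) form a basis of ℝ⁴, exhibiting two stable (eigenvalue e^{-λ}) and two unstable (eigenvalue e^{λ}) directions for the dual cat-map evolution. -/
import Mathlib


open Matrix

/-- Arnold's cat map. -/
def catC : Matrix (Fin 2) (Fin 2) ℝ := !![2, 1; 1, 1]

lemma catC_sq : catC ^ 2 - 1 = !![4, 3; 3, 1] := by
  norm_num [catC, pow_two, Matrix.mul_fin_two, Matrix.one_fin_two]
  ext i j; fin_cases i <;> fin_cases j <;> norm_num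

/-- The four directions `α₁ = (0, v₋)`, `α₂ = ((C²−Id)v₊, T v₊)`, `α₃ = (0, v₊)`,
`α₄ = ((C²−Id)v₋, T v₋)` form a basis of `ℝ⁴`. -/
theorem stmt13 (T : ℝ) (hT : T ≠ 0) (vp vm : Fin 2 → ℝ)
    (hvp0 : vp ≠ 0) (hvm0 : vm ≠ 0)
    (hvp : catC.mulVec vp = ((3 + Real.sqrt 5) / 2) • vp)
    (hvm : catC.mulVec vm = ((3 - Real.sqrt 5) / 2) • vm) :
    let a1 : Fin 2 ⊕ Fin 2 → ℝ := Sum.elim 0 vm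
    let a2 : Fin 2 ⊕ Fin 2 → ℝ := Sum.elim ((catC ^ 2 - 1).mulVec vp) (T • vp)
    let a3 : Fin 2 ⊕ Fin 2 → ℝ := Sum.elim 0 vp
    let a4 : Fin 2 ⊕ Fin 2 → ℝ := Sum.elim ((catC ^ 2 - 1).mulVec vm) (T • vm)
    LinearIndependent ℝ ![a1, a2, a3, a4] ∧
    Submodule.span ℝ {a1, a2, a3, a4} = (⊤ : Submodule ℝ (Fin 2 ⊕ Fin 2 → ℝ)) := by
  intro a1 a2 a3 a4
  set s := Real.sqrt 5 with hsdef
  have hs2 : s ^ 2 = 5 := Real.sq_sqrt (by norm_num)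
  have hs0 : 0 < s := Real.sqrt_pos.mpr (by norm_num)
  set a := vp 0 with ha
  set b := vp 1 with hb
  set c := vm 0 with hc
  set d := vm 1 with hd
  -- eigen equations componentwise
  have hp0 : 2 * a + b = (3 + s) / 2 * a := by
    have h := congrFun hvp 0
    simp [catC, Matrix.mulVec, dotProduct, Fin.sum_univ_two] at h
    linarith
  have hp1 : a + b = (3 + s) / 2 * b := by
    have h := congrFun hvp 1
    simp [catC, Matrix.mulVec, dotProduct, Fin.sum_univ_two] at h
    linarith
  have hm0 : 2 * c + d = (3 - s) / 2 * c := by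
    have h := congrFun hvm 0
    simp [catC, Matrix.mulVec, dotProduct, Fin.sum_univ_two] at h
    linarith
  have hm1 : c + d = (3 - s) / 2 * d := by
    have h := congrFun hvm 1
    simp [catC, Matrix.mulVec, dotProduct, Fin.sum_univ_two] at h
    linarith
  -- b = ((s-1)/2) a,  d = ((-1-s)/2) c
  have hba : b = (s - 1) / 2 * a := by linarith
  have hdc : d = (-1 - s) / 2 * c := by linarith
  have ha0 : a ≠ 0 := by
    intro h
    apply hvp0
    have hb0 : b = 0 := by rw [hba, h]; ring
    funext i; fin_cases i
    · exact h
    · exact hb0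
  have hc0 : c ≠ 0 := by
    intro h
    apply hvm0
    have hd0 : d = 0 := by rw [hdc, h]; ring
    funext i; fin_cases i
    · exact h
    · exact hd0
  have hli : LinearIndependent ℝ ![a1, a2, a3, a4] := by
    rw [Fintype.linearIndependent_iff]
    intro g hg
    have e1 := congrFun hg (Sum.inl 0)
    have e2 := congrFun hg (Sum.inl 1)
    have e3 := congrFun hg (Sum.inr 0)
    have e4 := congrFun hg (Sum.inr 1)
    simp [a1, a2, a3, a4, Fin.sum_univ_four, catC_sq, Matrix.mulVec,
      dotProduct, Fin.sum_univ_two, ← ha, ← hb, ← hc, ← hd] at e1 e2 e3 e4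
    -- e1: g0*0 + g1*(4a+3b) + g2*0 + g3*(4c+3d) = 0 (roughly)
    have F1 : g 1 * a + g 3 * c = 0 := by
      rw [hba] at e1 e2; rw [hdc] at e1 e2
      linarith
    have F2 : s * (g 3 * c) = 0 := by
      rw [hba] at e2; rw [hdc] at e2
      linear_combination ((5 + s) / 2) * F1 - e2
    have hg3 : g 3 = 0 := by
      rcases mul_eq_zero.mp F2 with h | h
      · exact absurd h (ne_of_gt hs0)
      · exact (mul_eq_zero.mp h).resolve_right hc0
    have hg1 : g 1 = 0 := by
      rw [hg3] at F1
      have := F1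
      simp at this
      exact (mul_eq_zero.mp (by linarith : g 1 * a = 0)).resolve_right ha0
    rw [hg1, hg3] at e3 e4
    have G1 : g 0 * c + g 2 * a = 0 := by linarith
    have G2 : s * (g 2 * a) = 0 := by
      rw [hba] at e4; rw [hdc] at e4
      linear_combination e4 - ((-1 - s) / 2) * G1
    have hg2 : g 2 = 0 := by
      rcases mul_eq_zero.mp G2 with h | h
      · exact absurd h (ne_of_gt hs0)
      · exact (mul_eq_zero.mp h).resolve_right ha0
    have hg0 : g 0 = 0 := by
      rw [hg2] at G1
      exact (mul_eq_zero.mp (by linarith : g 0 * c = 0)).resolve_right hc0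
    intro i
    fin_cases i
    · exact hg0
    · exact hg1
    · exact hg2
    · exact hg3
  refine ⟨hli, ?_⟩
  have hset : ({a1, a2, a3, a4} : Set (Fin 2 ⊕ Fin 2 → ℝ)) = Set.range ![a1, a2, a3, a4] := by
    ext x; simp [Matrix.range_cons]; tauto
  rw [hset]
  exact hli.span_eq_top_of_card_eq_finrank (by simp)
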